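/- arXiv:2105.06378 — 3 statements merged into one kernel-verified Lean document; each statement's English description precedes it below -/
import Mathlib

section
/- For every ε > 0 there exists a constant C_ε > 0 such that the following holds. Let G be a finite group acting transitively on a finite set Ω with |Ω| ≥ 2, and set d = ⌈C_ε · ln|Ω|⌉. Then the average, over all d-tuples (s₁,…,s_d) ∈ G^d (each tuple weighted uniformly, i.e. divide the sum by |G|^d), of λ(G↺Ω, S ⊔ S⁻¹) is at most ε, where S ⊔ S⁻¹ is the symmetric multiset {s₁,…,s_d, s₁⁻¹,…,s_d⁻¹} of size 2d. -/
/-!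
Let `M` be the averaging matrix of `S ⊔ S⁻¹`: it is symmetric and fixes the constant vector.
For `k` a power of two, iterating Cauchy–Schwarz (each step doubles the exponent) and bounding
`‖M^k v‖²` by the Frobenius norm of `M^k - J/|Ω|` gives `λ^{2k} ≤ tr M^{2k} - 1`, without any
spectral theory. Expand `tr M^{2k}` as an average of fixed-point counts over words of length
`2k` in the letters `sᵢ^{±1}`. If some generator occurs exactly once in a word, the word is a
bijective function of that generator, so its expected number of fixed points is that of a
uniform element of `G`, which is `1` by transitivity (Burnside). Hence only the words in which
every occurring generator occurs at least twice contribute to `E[tr M^{2k}] - 1`, each at most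
`|Ω| - 1`, and there are at most `(e d / k)^k (2k)^{2k}` of them. With
`log |Ω| ≤ k ≤ 2 log |Ω|` and `d ≥ 16 log |Ω| / ε²` this gives
`E[λ^{2k}] ≤ (e² k / d)^k ≤ ε^{2k}`, and Jensen's inequality finishes.
-/

open Finset

/-- `λ(G ↺ Ω, t)` for the (multi)set given by the tuple `t : ι → G`, where the right action
of `G` on `Ω` is given by the map `a : Ω → G → Ω`:  the supremum of
`|⟨Mv,v⟩|/⟨v,v⟩` over nonzero mean-zero `v : Ω → ℝ`, where
`(Mv)(ω) = (1/|ι|) ∑ i, v (ω · t i)`. -/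
noncomputable def lambdaSch {G Ω ι : Type*} [Group G] [Fintype Ω] [Fintype ι]
    (a : Ω → G → Ω) (t : ι → G) : ℝ :=
  sSup {r : ℝ | ∃ v : Ω → ℝ, (∑ ω, v ω) = 0 ∧ v ≠ 0 ∧
    r = |∑ ω, ((Fintype.card ι : ℝ)⁻¹ * ∑ i, v (a ω (t i))) * v ω| / (∑ ω, v ω * v ω)}

open Matrix

namespace RandomSchreier

theorem sSup_pow_le {S : Set ℝ} (hS : ∀ r ∈ S, 0 ≤ r) {K : ℕ} (hK : K ≠ 0) {b : ℝ} (hb : 0 ≤ b)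
    (h : ∀ r ∈ S, r ^ K ≤ b) : sSup S ^ K ≤ b := by
  have hle : sSup S ≤ b ^ (K⁻¹ : ℝ) := by
    refine Real.sSup_le (fun r hr => ?_) (by positivity)
    rw [← Real.pow_rpow_inv_natCast (hS r hr) hK]
    exact Real.rpow_le_rpow (pow_nonneg (hS r hr) K) (h r hr) (by positivity)
  calc sSup S ^ K ≤ (b ^ (K⁻¹ : ℝ)) ^ K := pow_le_pow_left₀ (Real.sSup_nonneg hS) hle K
    _ = b := Real.rpow_inv_natCast_pow hb hK

theorem average_le_of_average_pow_le {ι : Type*} [Fintype ι] [Nonempty ι] {f : ι → ℝ}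
    (hf : ∀ i, 0 ≤ f i) {K : ℕ} (hK : K ≠ 0) {x : ℝ} (hx : 0 ≤ x)
    (h : (Fintype.card ι : ℝ)⁻¹ * ∑ i, f i ^ K ≤ x ^ K) :
    (Fintype.card ι : ℝ)⁻¹ * ∑ i, f i ≤ x := by
  have hw : ∑ _i : ι, (Fintype.card ι : ℝ)⁻¹ = 1 := by
    rw [sum_const, card_univ, nsmul_eq_mul, mul_inv_cancel₀ (by positivity)]
  refine le_of_pow_le_pow_left₀ hK hx ?_
  calc ((Fintype.card ι : ℝ)⁻¹ * ∑ i, f i) ^ K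
      ≤ ∑ i, (Fintype.card ι : ℝ)⁻¹ * f i ^ K := by
        rw [mul_sum]
        exact Real.pow_arith_mean_le_arith_mean_pow univ _ _ (fun _ _ => by positivity) hw
          (fun i _ => hf i) K
    _ ≤ x ^ K := by rwa [← mul_sum]

theorem exists_two_pow_mem_Icc {x : ℝ} (hx : 1 / 2 ≤ x) :
    ∃ m : ℕ, x ≤ 2 ^ m ∧ (2 : ℝ) ^ m ≤ 2 * x := by
  classical
  have hex : ∃ m : ℕ, x ≤ 2 ^ m := (pow_unbounded_of_one_lt x one_lt_two).imp fun _ => le_of_lt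
  refine ⟨Nat.find hex, Nat.find_spec hex, ?_⟩
  rcases hm : Nat.find hex with _ | m
  · linarith [pow_zero (2 : ℝ)]
  · have := Nat.find_min hex (show m < Nat.find hex by omega)
    rw [pow_succ']
    linarith

theorem sum_range_choose_le_exp_mul_pow {d k : ℕ} (hk : 0 < k) (hkd : k ≤ d) :
    ∑ j ∈ range (k + 1), (d.choose j : ℝ) ≤ (Real.exp 1 * d / k) ^ k := by
  have hdk : 1 ≤ (d : ℝ) / k := by rw [one_le_div (by positivity)]; exact_mod_cast hkd
  calc ∑ j ∈ range (k + 1), (d.choose j : ℝ)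
      ≤ ∑ j ∈ range (k + 1), ((d : ℝ) / k) ^ k * ((k : ℝ) ^ j / j.factorial) := by
        refine sum_le_sum fun j hj => (Nat.choose_le_pow_div j d).trans ?_
        calc (d : ℝ) ^ j / j.factorial = ((d : ℝ) / k) ^ j * ((k : ℝ) ^ j / j.factorial) := by
              rw [div_pow, ← mul_div_assoc, div_mul_cancel₀ _ (by positivity)]
          _ ≤ _ := mul_le_mul_of_nonneg_right
              (pow_le_pow_right₀ hdk (Nat.lt_succ_iff.mp (mem_range.mp hj))) (by positivity)
    _ ≤ ((d : ℝ) / k) ^ k * Real.exp k := by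
        rw [← mul_sum]
        gcongr
        exact Real.sum_le_exp_of_nonneg (by positivity) _
    _ = (Real.exp 1 * d / k) ^ k := by rw [← Real.exp_one_pow]; ring

theorem two_mul_card_toFinset_le_length {β : Type*} [DecidableEq β] {l : List β}
    (h : ∀ b, l.count b ≠ 1) : 2 * #l.toFinset ≤ l.length := by
  calc 2 * #l.toFinset = ∑ _b ∈ l.toFinset, 2 := by rw [sum_const, smul_eq_mul, mul_comm]
    _ ≤ ∑ b ∈ l.toFinset, l.count b := sum_le_sum fun b hb => by
        have := List.count_pos_iff.mpr (List.mem_toFinset.mp hb)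
        have := h b
        omega
    _ = l.length := List.sum_toFinset_count_eq_length l

theorem sum_eq_sum_of_sum_update_eq {ι β M : Type*} [Fintype ι] [DecidableEq ι]
    [Fintype β] [AddCommMonoid M] (m : ι) {f g : (ι → β) → M}
    (h : ∀ s, ∑ u, f (Function.update s m u) = ∑ u, g (Function.update s m u)) :
    ∑ s, f s = ∑ s, g s := by
  rcases isEmpty_or_nonempty β with hβ | ⟨⟨b⟩⟩
  · have : IsEmpty (ι → β) := ⟨fun s => hβ.elim (s m)⟩
    simp only [univ_eq_empty, sum_empty]
  set E := Equiv.funSplitAt m β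
  have hE (u : β) (r) : E.symm (u, r) = Function.update (E.symm (b, r)) m u := by
    ext j
    by_cases hj : j = m
    · subst hj; simp [E]
    · simp [E, hj]
  rw [← E.symm.sum_comp f, ← E.symm.sum_comp g, Fintype.sum_prod_type, Fintype.sum_prod_type,
    sum_comm, sum_comm (f := fun u r => g (E.symm (u, r)))]
  refine sum_congr rfl fun r _ => ?_
  simpa only [← hE] using h (E.symm (b, r))

section SymmetricMatrix

variable {n : Type*} [Fintype n]

theorem sq_dotProduct_le (v w : n → ℝ) : (v ⬝ᵥ w) ^ 2 ≤ (v ⬝ᵥ v) * (w ⬝ᵥ w) := by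
  simpa only [dotProduct, sq] using sum_mul_sq_le_sq_mul_sq univ v w

theorem dotProduct_self_nonneg (v : n → ℝ) : 0 ≤ v ⬝ᵥ v :=
  sum_nonneg fun i _ => mul_self_nonneg (v i)

theorem mulVec_dotProduct_mulVec_le (B : Matrix n n ℝ) (v : n → ℝ) :
    (B *ᵥ v) ⬝ᵥ (B *ᵥ v) ≤ (∑ i, ∑ j, B i j ^ 2) * (v ⬝ᵥ v) := by
  rw [sum_mul]
  refine sum_le_sum fun i _ => ?_
  simpa only [← sq, dotProduct, mulVec] using sq_dotProduct_le (B i) v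

theorem sum_sum_sub_inv_card_sq [Nonempty n] {B : Matrix n n ℝ} (hB : B *ᵥ 1 = 1) :
    ∑ i, ∑ j, (B i j - (Fintype.card n : ℝ)⁻¹) ^ 2 = ∑ i, ∑ j, B i j ^ 2 - 1 := by
  set c : ℝ := (Fintype.card n : ℝ)⁻¹
  have hc : (Fintype.card n : ℝ) * c = 1 := mul_inv_cancel₀ (by positivity)
  have hrow (i : n) : ∑ j, (B i j - c) ^ 2 = ∑ j, B i j ^ 2 - c := by
    have hsum : ∑ j, B i j = 1 := by simpa [mulVec, dotProduct] using congrFun hB i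
    simp only [sub_sq, sum_add_distrib, sum_sub_distrib, ← sum_mul, ← mul_sum, hsum, sum_const,
      card_univ, nsmul_eq_mul]
    linear_combination c * hc
  simp only [hrow, sum_sub_distrib, sum_const, card_univ, nsmul_eq_mul, hc]

theorem mulVec_dotProduct_mulVec_le_of_sum_eq_zero [Nonempty n] {B : Matrix n n ℝ}
    (hB : B *ᵥ 1 = 1) {v : n → ℝ} (hv : ∑ i, v i = 0) :
    (B *ᵥ v) ⬝ᵥ (B *ᵥ v) ≤ (∑ i, ∑ j, B i j ^ 2 - 1) * (v ⬝ᵥ v) := by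
  set B' := of fun i j => B i j - (Fintype.card n : ℝ)⁻¹
  have hB' : B' *ᵥ v = B *ᵥ v := by
    ext i
    simp [B', mulVec, dotProduct, sub_mul, sum_sub_distrib, ← mul_sum, hv]
  calc (B *ᵥ v) ⬝ᵥ (B *ᵥ v) = (B' *ᵥ v) ⬝ᵥ (B' *ᵥ v) := by rw [hB']
    _ ≤ _ := mulVec_dotProduct_mulVec_le B' v
    _ = _ := by simp only [B', of_apply, sum_sum_sub_inv_card_sq hB]

variable [DecidableEq n] {A : Matrix n n ℝ}

theorem pow_mulVec_one (hA : A *ᵥ 1 = 1) (k : ℕ) : A ^ k *ᵥ 1 = 1 := by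
  induction k with
  | zero => simp
  | succ k ih => rw [pow_succ, ← mulVec_mulVec, hA, ih]

theorem trace_pow_add_self (hA : Aᵀ = A) (k : ℕ) :
    trace (A ^ (k + k)) = ∑ i, ∑ j, (A ^ k) i j ^ 2 := by
  have hsymm (i j : n) : (A ^ k) j i = (A ^ k) i j := by
    rw [← transpose_apply (A ^ k), transpose_pow, hA]
  simp only [pow_add, trace, Matrix.diag, mul_apply, hsymm, sq]

theorem dotProduct_mulVec_pow_add (hA : Aᵀ = A) (v : n → ℝ) (j l : ℕ) :
    v ⬝ᵥ (A ^ (j + l)) *ᵥ v = ((A ^ j) *ᵥ v) ⬝ᵥ ((A ^ l) *ᵥ v) := by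
  rw [pow_add, ← mulVec_mulVec, dotProduct_mulVec, ← mulVec_transpose, transpose_pow, hA]

theorem sq_dotProduct_mulVec_pow_le (hA : Aᵀ = A) (v : n → ℝ) (j : ℕ) :
    (v ⬝ᵥ (A ^ j) *ᵥ v) ^ 2 ≤ (v ⬝ᵥ (A ^ (j + j)) *ᵥ v) * (v ⬝ᵥ v) := by
  rw [dotProduct_mulVec_pow_add hA, mul_comm]
  exact sq_dotProduct_le v _

theorem dotProduct_mulVec_pow_two_pow_le (hA : Aᵀ = A) (v : n → ℝ) (m : ℕ) :
    (v ⬝ᵥ A *ᵥ v) ^ 2 ^ (m + 1) ≤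
      (v ⬝ᵥ (A ^ 2 ^ (m + 1)) *ᵥ v) * (v ⬝ᵥ v) ^ (2 ^ (m + 1) - 1) := by
  induction m with
  | zero => simpa using sq_dotProduct_mulVec_pow_le hA v 1
  | succ m ih =>
    set K := 2 ^ (m + 1)
    have hK : 1 ≤ K := Nat.one_le_two_pow
    have hD := dotProduct_self_nonneg v
    calc (v ⬝ᵥ A *ᵥ v) ^ 2 ^ (m + 1 + 1) = ((v ⬝ᵥ A *ᵥ v) ^ K) ^ 2 := by rw [← pow_mul, pow_succ]
      _ ≤ ((v ⬝ᵥ (A ^ K) *ᵥ v) * (v ⬝ᵥ v) ^ (K - 1)) ^ 2 :=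
          pow_le_pow_left₀ (Even.pow_nonneg ⟨2 ^ m, by ring⟩ _) ih 2
      _ = (v ⬝ᵥ (A ^ K) *ᵥ v) ^ 2 * (v ⬝ᵥ v) ^ (K - 1 + (K - 1)) := by ring
      _ ≤ (v ⬝ᵥ (A ^ (K + K)) *ᵥ v) * (v ⬝ᵥ v) * (v ⬝ᵥ v) ^ (K - 1 + (K - 1)) := by
          gcongr; exact sq_dotProduct_mulVec_pow_le hA v K
      _ = (v ⬝ᵥ (A ^ 2 ^ (m + 1 + 1)) *ᵥ v) * (v ⬝ᵥ v) ^ (2 ^ (m + 1 + 1) - 1) := by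
          rw [mul_assoc, ← pow_succ', pow_succ 2 (m + 1), mul_two]
          congr 2; omega

theorem pow_abs_dotProduct_mulVec_le [Nonempty n] (hA : Aᵀ = A) (hA1 : A *ᵥ 1 = 1)
    {v : n → ℝ} (hv : ∑ i, v i = 0) (m : ℕ) :
    |v ⬝ᵥ A *ᵥ v| ^ 2 ^ (m + 1) ≤ (trace (A ^ 2 ^ (m + 1)) - 1) * (v ⬝ᵥ v) ^ 2 ^ (m + 1) := by
  have hD := dotProduct_self_nonneg v
  have hK : 2 ^ (m + 1) = 2 ^ m + 2 ^ m := by ring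
  have hsquare : v ⬝ᵥ (A ^ 2 ^ (m + 1)) *ᵥ v ≤ (trace (A ^ 2 ^ (m + 1)) - 1) * (v ⬝ᵥ v) := by
    rw [hK, dotProduct_mulVec_pow_add hA, trace_pow_add_self hA]
    exact mulVec_dotProduct_mulVec_le_of_sum_eq_zero (pow_mulVec_one hA1 _) hv
  calc |v ⬝ᵥ A *ᵥ v| ^ 2 ^ (m + 1) = (v ⬝ᵥ A *ᵥ v) ^ 2 ^ (m + 1) :=
        (Even.pow_abs ⟨2 ^ m, hK⟩ _)
    _ ≤ (v ⬝ᵥ (A ^ 2 ^ (m + 1)) *ᵥ v) * (v ⬝ᵥ v) ^ (2 ^ (m + 1) - 1) :=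
        dotProduct_mulVec_pow_two_pow_le hA v m
    _ ≤ (trace (A ^ 2 ^ (m + 1)) - 1) * (v ⬝ᵥ v) * (v ⬝ᵥ v) ^ (2 ^ (m + 1) - 1) := by gcongr
    _ = _ := by rw [mul_assoc, ← pow_succ', Nat.sub_add_cancel Nat.one_le_two_pow]

end SymmetricMatrix

structure IsRightAction {G Ω : Type*} [Group G] (a : Ω → G → Ω) : Prop where
  act_one (ω : Ω) : a ω 1 = ω
  act_mul (ω : Ω) (g h : G) : a (a ω g) h = a ω (g * h)

theorem IsRightAction.act_inv_eq_iff {G Ω : Type*} [Group G] {a : Ω → G → Ω}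
    (ha : IsRightAction a) {g : G} {ω σ : Ω} : a ω g⁻¹ = σ ↔ a σ g = ω := by
  constructor
  · rintro rfl; rw [ha.act_mul, inv_mul_cancel, ha.act_one]
  · rintro rfl; rw [ha.act_mul, mul_inv_cancel, ha.act_one]

theorem IsRightAction.sum_card_fixedPoints {G Ω : Type*} [Group G] [Fintype G] [Fintype Ω]
    [DecidableEq Ω] [Nonempty Ω] {a : Ω → G → Ω} (ha : IsRightAction a)
    (htrans : ∀ ω ω' : Ω, ∃ g, a ω g = ω') :
    ∑ g : G, #{ω | a ω g = ω} = Fintype.card G := by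
  obtain ⟨ω₀⟩ := ‹Nonempty Ω›
  have hstab (ω : Ω) : #{g | a ω g = ω} = #{g | a ω₀ g = ω} := by
    obtain ⟨h, rfl⟩ := htrans ω₀ ω
    exact card_equiv (Equiv.mulLeft h) fun g => by simp [ha.act_mul]
  calc ∑ g : G, #{ω | a ω g = ω} = ∑ ω : Ω, #{g | a ω g = ω} := by
        simp only [card_filter]; exact sum_comm
    _ = ∑ ω : Ω, #{g | a ω₀ g = ω} := sum_congr rfl fun ω _ => hstab ω
    _ = Fintype.card G := (card_eq_sum_card_fiberwise fun g _ => mem_univ (a ω₀ g)).symm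

theorem lambdaSch_nonneg {G Ω ι : Type*} [Group G] [Fintype Ω] [Fintype ι] (a : Ω → G → Ω)
    (t : ι → G) : 0 ≤ lambdaSch a t := by
  refine Real.sSup_nonneg ?_
  rintro r ⟨v, -, -, rfl⟩
  exact div_nonneg (abs_nonneg _) (dotProduct_self_nonneg v)

section ActionMatrix

variable {G Ω ι : Type*} [DecidableEq Ω] {a : Ω → G → Ω}

variable (a) in
noncomputable def actionMatrix (g : G) : Matrix Ω Ω ℝ :=
  of fun ω σ => if a ω g = σ then 1 else 0

theorem IsRightAction.transpose_actionMatrix [Group G] (ha : IsRightAction a) (g : G) :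
    (actionMatrix a g)ᵀ = actionMatrix a g⁻¹ := by
  ext ω σ
  simp [actionMatrix, ha.act_inv_eq_iff]

variable [Fintype ι]

variable (a) in
noncomputable def averagingMatrix (t : ι → G) : Matrix Ω Ω ℝ :=
  (Fintype.card ι : ℝ)⁻¹ • ∑ i, actionMatrix a (t i)

theorem IsRightAction.transpose_averagingMatrix [Group G] (ha : IsRightAction a) {t : ι → G}
    (σ : ι ≃ ι) (hσ : ∀ i, t (σ i) = (t i)⁻¹) : (averagingMatrix a t)ᵀ = averagingMatrix a t := by
  simp only [averagingMatrix, transpose_smul, transpose_sum, ha.transpose_actionMatrix, ← hσ]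
  congr 1
  exact σ.sum_comp fun i => actionMatrix a (t i)

variable [Fintype Ω]

theorem actionMatrix_mulVec (g : G) (v : Ω → ℝ) : actionMatrix a g *ᵥ v = fun ω => v (a ω g) := by
  ext ω
  simp [actionMatrix, mulVec, dotProduct]

theorem trace_actionMatrix (g : G) : trace (actionMatrix a g) = #{ω | a ω g = ω} := by
  simp [actionMatrix, trace]

theorem averagingMatrix_mulVec (t : ι → G) (v : Ω → ℝ) (ω : Ω) :
    (averagingMatrix a t *ᵥ v) ω = (Fintype.card ι : ℝ)⁻¹ * ∑ i, v (a ω (t i)) := by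
  simp [averagingMatrix, smul_mulVec, sum_mulVec, actionMatrix_mulVec]

theorem averagingMatrix_mulVec_one [Nonempty ι] (t : ι → G) : averagingMatrix a t *ᵥ 1 = 1 := by
  ext ω
  simp [averagingMatrix_mulVec]

variable [Group G]

noncomputable def IsRightAction.actionMatrixHom (ha : IsRightAction a) : G →* Matrix Ω Ω ℝ where
  toFun := actionMatrix a
  map_one' := by ext ω σ; simp [actionMatrix, ha.act_one, one_apply]
  map_mul' g h := by
    ext ω σ
    simp only [actionMatrix, of_apply, mul_apply, ite_mul, one_mul, zero_mul, ← ha.act_mul]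
    simp

theorem IsRightAction.trace_averagingMatrix_pow (ha : IsRightAction a) (t : ι → G) (K : ℕ) :
    trace (averagingMatrix a t ^ K) =
      (Fintype.card ι : ℝ)⁻¹ ^ K *
        ∑ w : Fin K → ι, (#{ω | a ω (List.ofFn (t ∘ w)).prod = ω} : ℝ) := by
  -- noncommutative expansion of the power: multilinearity of `(x₁, …, x_K) ↦ x₁ ⋯ x_K`
  have hexpand : (∑ i, actionMatrix a (t i)) ^ K =
      ∑ w : Fin K → ι, actionMatrix a (List.ofFn (t ∘ w)).prod := by
    rw [← MultilinearMap.mkPiAlgebraFin_apply_const (R := ℝ), MultilinearMap.map_sum]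
    refine sum_congr rfl fun w _ => ?_
    change _ = ha.actionMatrixHom _
    rw [MultilinearMap.mkPiAlgebraFin_apply, map_list_prod, List.map_ofFn]
    rfl
  simp only [averagingMatrix, smul_pow, trace_smul, hexpand, trace_sum, trace_actionMatrix,
    smul_eq_mul]

theorem IsRightAction.lambdaSch_pow_le [Nonempty Ω] [Nonempty ι] (ha : IsRightAction a)
    {t : ι → G} (σ : ι ≃ ι) (hσ : ∀ i, t (σ i) = (t i)⁻¹) (m : ℕ) :
    lambdaSch a t ^ 2 ^ (m + 1) ≤ trace (averagingMatrix a t ^ 2 ^ (m + 1)) - 1 := by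
  set M := averagingMatrix a t
  have hM1 : M *ᵥ 1 = 1 := averagingMatrix_mulVec_one t
  have hMt : Mᵀ = M := ha.transpose_averagingMatrix σ hσ
  have htrace : 0 ≤ trace (M ^ 2 ^ (m + 1)) - 1 := by
    rw [pow_succ, mul_two, trace_pow_add_self hMt, ← sum_sum_sub_inv_card_sq (pow_mulVec_one hM1 _)]
    positivity
  refine sSup_pow_le ?_ (by positivity) htrace ?_
  · rintro r ⟨v, -, -, rfl⟩
    exact div_nonneg (abs_nonneg _) (dotProduct_self_nonneg v)
  rintro r ⟨v, hv0, hv, rfl⟩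
  rw [div_pow]
  have hD : 0 < v ⬝ᵥ v := (dotProduct_self_nonneg v).lt_of_ne' (dotProduct_self_eq_zero.not.mpr hv)
  have hquad : ∑ ω, ((Fintype.card ι : ℝ)⁻¹ * ∑ i, v (a ω (t i))) * v ω = v ⬝ᵥ M *ᵥ v := by
    simp only [dotProduct, M, averagingMatrix_mulVec, mul_comm (v _)]
  change |_| ^ _ / (v ⬝ᵥ v) ^ _ ≤ _
  rw [hquad, div_le_iff₀ (pow_pos hD _)]
  exact pow_abs_dotProduct_mulVec_le hMt hM1 hv0 m

end ActionMatrix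

section Words

variable {G κ : Type*} [Group G] [DecidableEq κ]

def symmetrize (s : κ → G) : κ ⊕ κ → G := Sum.elim s fun i => (s i)⁻¹

theorem symmetrize_update_of_ne {s : κ → G} {m : κ} {x : κ ⊕ κ} (hx : Sum.elim id id x ≠ m)
    (u : G) : symmetrize (Function.update s m u) x = symmetrize s x := by
  obtain i | i := x <;>
    simp only [symmetrize, Sum.elim_inl, Sum.elim_inr, Function.update_of_ne (show i ≠ m from hx)]

theorem prod_map_symmetrize_update_of_count_eq_zero {L : List (κ ⊕ κ)} {m : κ}
    (h : (L.map (Sum.elim id id)).count m = 0) (s : κ → G) (u : G) :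
    (L.map (symmetrize (Function.update s m u))).prod = (L.map (symmetrize s)).prod := by
  refine congrArg List.prod (List.map_congr_left fun x hx => symmetrize_update_of_ne ?_ u)
  rintro rfl
  exact List.count_eq_zero.mp h (List.mem_map_of_mem hx)

theorem bijective_prod_map_symmetrize_update {L : List (κ ⊕ κ)} {m : κ}
    (h : (L.map (Sum.elim id id)).count m = 1) (s : κ → G) :
    Function.Bijective fun u => (L.map (symmetrize (Function.update s m u))).prod := by
  induction L with
  | nil => simp at h
  | cons x L ih =>
    simp only [List.map_cons, List.count_cons, beq_iff_eq] at h
    simp only [List.map_cons, List.prod_cons]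
    by_cases hx : Sum.elim id id x = m
    · rw [hx, if_pos rfl, add_eq_right] at h
      simp only [prod_map_symmetrize_update_of_count_eq_zero h]
      obtain i | i := x <;> obtain rfl : i = m := hx
      · simp only [symmetrize, Sum.elim_inl, Function.update_self]
        exact Group.mulRight_bijective _
      · simp only [symmetrize, Sum.elim_inr, Function.update_self]
        exact (Group.mulRight_bijective _).comp inv_involutive.bijective
    · rw [if_neg hx, add_zero] at h
      simp only [symmetrize_update_of_ne hx]
      exact (Group.mulLeft_bijective _).comp (ih h)

end Words

section Expectation

variable {G Ω κ : Type*} [Group G] [Fintype G] [Fintype Ω] [DecidableEq Ω] [Fintype κ]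
  [DecidableEq κ] {a : Ω → G → Ω}

variable (κ) in
def noLoneLetterWords (K : ℕ) : Finset (Fin K → κ ⊕ κ) :=
  {w | ∀ m, ((List.ofFn w).map (Sum.elim id id)).count m ≠ 1}

theorem IsRightAction.sum_card_fixedPoints_prod_of_count_eq_one [Nonempty Ω]
    (ha : IsRightAction a) (htrans : ∀ ω ω' : Ω, ∃ g, a ω g = ω') {L : List (κ ⊕ κ)} {m : κ}
    (h : (L.map (Sum.elim id id)).count m = 1) :
    ∑ s : κ → G, #{ω | a ω (L.map (symmetrize s)).prod = ω} = Fintype.card G ^ Fintype.card κ := by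
  rw [← Fintype.card_fun, Fintype.card_eq_sum_ones]
  refine sum_eq_sum_of_sum_update_eq m fun s => ?_
  rw [(bijective_prod_map_symmetrize_update h s).sum_comp fun g => #{ω | a ω g = ω},
    ha.sum_card_fixedPoints htrans, Fintype.card_eq_sum_ones]

theorem card_finset_card_le_le (k : ℕ) :
    #{A : Finset κ | #A ≤ k} ≤ ∑ j ∈ range (k + 1), (Fintype.card κ).choose j := by
  calc #{A : Finset κ | #A ≤ k} ≤ #((range (k + 1)).biUnion fun j => powersetCard j univ) := by
        refine card_le_card fun A hA => ?_
        simp only [mem_filter, mem_univ, true_and] at hA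
        simpa [mem_biUnion] using Nat.lt_succ_of_le hA
    _ ≤ _ := card_biUnion_le.trans_eq (by simp)

theorem card_noLoneLetterWords_le (k : ℕ) :
    #(noLoneLetterWords κ (2 * k)) ≤ #{A : Finset κ | #A ≤ k} * (2 * k) ^ (2 * k) := by
  set S : Finset (Finset κ) := {A | #A ≤ k}
  have hsub : noLoneLetterWords κ (2 * k) ⊆
      S.biUnion fun A => Fintype.piFinset fun _ => A.disjSum A := by
    intro w hw
    simp only [noLoneLetterWords, mem_filter, mem_univ, true_and] at hw
    refine mem_biUnion.mpr ⟨((List.ofFn w).map (Sum.elim id id)).toFinset, ?_, ?_⟩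
    · have := two_mul_card_toFinset_le_length hw
      simp only [List.length_map, List.length_ofFn] at this
      simp only [S, mem_filter, mem_univ, true_and]
      omega
    · have hmem (A : Finset κ) (x : κ ⊕ κ) : x ∈ A.disjSum A ↔ Sum.elim id id x ∈ A := by
        obtain i | i := x <;> simp
      refine Fintype.mem_piFinset.mpr fun j => ?_
      rw [hmem, List.mem_toFinset]
      exact List.mem_map_of_mem (List.mem_ofFn.mpr ⟨j, rfl⟩)
  calc #(noLoneLetterWords κ (2 * k))
      ≤ ∑ A ∈ S, #(Fintype.piFinset fun _ : Fin (2 * k) => A.disjSum A) :=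
        (card_le_card hsub).trans card_biUnion_le
    _ ≤ ∑ _A ∈ S, (2 * k) ^ (2 * k) := sum_le_sum fun A hA => by
        simp only [S, mem_filter, mem_univ, true_and] at hA
        rw [Fintype.card_piFinset, prod_const, card_disjSum, card_univ, Fintype.card_fin]
        gcongr
        omega
    _ = #S * (2 * k) ^ (2 * k) := by rw [sum_const, smul_eq_mul]

theorem card_noLoneLetterWords_div_le {k : ℕ} (hk : 0 < k) (hkd : k ≤ Fintype.card κ) :
    (#(noLoneLetterWords κ (2 * k)) : ℝ) / (2 * Fintype.card κ : ℝ) ^ (2 * k) ≤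
      (Real.exp 1 * k / Fintype.card κ) ^ k := by
  set d := Fintype.card κ
  have hcount := (card_noLoneLetterWords_le (κ := κ) k).trans
    (Nat.mul_le_mul_right _ (card_finset_card_le_le k))
  calc (#(noLoneLetterWords κ (2 * k)) : ℝ) / (2 * d : ℝ) ^ (2 * k)
      ≤ (∑ j ∈ range (k + 1), (d.choose j : ℝ)) * (2 * k) ^ (2 * k) / (2 * d : ℝ) ^ (2 * k) := by
        gcongr; exact_mod_cast hcount
    _ ≤ (Real.exp 1 * d / k) ^ k * (2 * k) ^ (2 * k) / (2 * d : ℝ) ^ (2 * k) := by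
        gcongr; exact sum_range_choose_le_exp_mul_pow hk hkd
    _ = (Real.exp 1 * d / k) ^ k * ((2 * k) / (2 * d)) ^ (2 * k) := by
        rw [div_pow (2 * (k : ℝ)), mul_div_assoc]
    _ = (Real.exp 1 * d / k * ((2 * k) / (2 * d)) ^ 2) ^ k := by rw [pow_mul, ← mul_pow]
    _ = (Real.exp 1 * k / d) ^ k := by
        congr 1
        field_simp

theorem IsRightAction.sum_trace_averagingMatrix_pow_sub_one_le [Nonempty Ω] [Nonempty κ]
    (ha : IsRightAction a) (htrans : ∀ ω ω' : Ω, ∃ g, a ω g = ω') (K : ℕ) :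
    ∑ s : κ → G, (trace (averagingMatrix a (symmetrize s) ^ K) - 1) ≤
      #(noLoneLetterWords κ K) / (2 * Fintype.card κ : ℝ) ^ K * (Fintype.card Ω - 1) *
        Fintype.card G ^ Fintype.card κ := by
  set N : ℝ := Fintype.card G ^ Fintype.card κ with hN
  have hword (w : Fin K → κ ⊕ κ) :
      ∑ s : κ → G, (#{ω | a ω (List.ofFn (symmetrize s ∘ w)).prod = ω} : ℝ) ≤
        N + if w ∈ noLoneLetterWords κ K then (Fintype.card Ω - 1) * N else 0 := by
    split_ifs with hw
    · calc _ ≤ ∑ _s : κ → G, (Fintype.card Ω : ℝ) := sum_le_sum fun s _ => by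
            exact_mod_cast (card_filter_le _ _).trans_eq card_univ
        _ = N + (Fintype.card Ω - 1) * N := by simp [N]; ring
    · obtain ⟨m, hm⟩ : ∃ m, ((List.ofFn w).map (Sum.elim id id)).count m = 1 := by
        simpa [noLoneLetterWords] using hw
      simp only [add_zero, ← List.map_ofFn, hN]
      exact_mod_cast (ha.sum_card_fixedPoints_prod_of_count_eq_one htrans hm).le
  have hcard : (Fintype.card (κ ⊕ κ) : ℝ) = 2 * Fintype.card κ := by
    rw [Fintype.card_sum]; push_cast; ring
  calc ∑ s : κ → G, (trace (averagingMatrix a (symmetrize s) ^ K) - 1)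
      = (2 * Fintype.card κ : ℝ)⁻¹ ^ K *
          ∑ w : Fin K → κ ⊕ κ,
            ∑ s : κ → G, (#{ω | a ω (List.ofFn (symmetrize s ∘ w)).prod = ω} : ℝ) - N := by
        simp only [sum_sub_distrib, ha.trace_averagingMatrix_pow, ← mul_sum, hcard, sum_const,
          card_univ, Fintype.card_fun, N, nsmul_one, Nat.cast_pow]
        rw [sum_comm]
    _ ≤ (2 * Fintype.card κ : ℝ)⁻¹ ^ K * ∑ w : Fin K → κ ⊕ κ,
          (N + if w ∈ noLoneLetterWords κ K then (Fintype.card Ω - 1) * N else 0) - N := by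
        gcongr with w; exact hword w
    _ = (2 * Fintype.card κ : ℝ)⁻¹ ^ K * ((2 * Fintype.card κ : ℝ) ^ K * N +
          #(noLoneLetterWords κ K) * ((Fintype.card Ω - 1) * N)) - N := by
        rw [sum_add_distrib, sum_ite_mem, univ_inter, sum_const, sum_const, card_univ,
          Fintype.card_fun, Fintype.card_fin, nsmul_eq_mul, nsmul_eq_mul, Nat.cast_pow, hcard]
    _ = _ := by
        rw [mul_add, ← mul_assoc, ← mul_pow, inv_mul_cancel₀ (by positivity), one_pow, one_mul,
          div_eq_inv_mul, inv_pow]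
        ring

theorem IsRightAction.average_lambdaSch_pow_le [Nonempty Ω] (ha : IsRightAction a)
    (htrans : ∀ ω ω' : Ω, ∃ g, a ω g = ω') {m : ℕ} (hkd : 2 ^ m ≤ Fintype.card κ)
    (hlog : Real.log (Fintype.card Ω) ≤ (2 ^ m : ℕ)) :
    (Fintype.card (κ → G) : ℝ)⁻¹ * ∑ s : κ → G, lambdaSch a (symmetrize s) ^ (2 * 2 ^ m) ≤
      (Real.exp 1 ^ 2 * (2 ^ m : ℕ) / Fintype.card κ) ^ 2 ^ m := by
  set k := 2 ^ m
  set d := Fintype.card κ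
  have hk : 0 < k := by positivity
  have : Nonempty κ := Fintype.card_pos_iff.mp (hk.trans_le hkd)
  have hlambda (s : κ → G) : lambdaSch a (symmetrize s) ^ (2 * k) ≤
      trace (averagingMatrix a (symmetrize s) ^ (2 * k)) - 1 := by
    rw [← pow_succ']
    refine ha.lambdaSch_pow_le (Equiv.sumComm κ κ) (fun x => ?_) m
    obtain i | i := x <;> simp [symmetrize]
  have hn : (Fintype.card Ω : ℝ) - 1 ≤ Real.exp 1 ^ k := by
    rw [Real.exp_one_pow, ← Real.exp_log (Nat.cast_pos.mpr (Fintype.card_pos (α := Ω)))]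
    linarith [Real.exp_le_exp.mpr hlog]
  have hn1 : (0 : ℝ) ≤ Fintype.card Ω - 1 := sub_nonneg.mpr (Nat.one_le_cast.mpr Fintype.card_pos)
  have hN : (0 : ℝ) < Fintype.card (κ → G) := Nat.cast_pos.mpr Fintype.card_pos
  calc (Fintype.card (κ → G) : ℝ)⁻¹ * ∑ s : κ → G, lambdaSch a (symmetrize s) ^ (2 * k)
      ≤ (Fintype.card (κ → G) : ℝ)⁻¹ *
          ∑ s : κ → G, (trace (averagingMatrix a (symmetrize s) ^ (2 * k)) - 1) := by
        gcongr with s; exact hlambda s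
    _ ≤ (Fintype.card (κ → G) : ℝ)⁻¹ * (#(noLoneLetterWords κ (2 * k)) / (2 * d : ℝ) ^ (2 * k) *
          (Fintype.card Ω - 1) * Fintype.card (κ → G)) := by
        gcongr
        simpa [Fintype.card_fun] using ha.sum_trace_averagingMatrix_pow_sub_one_le htrans (2 * k)
    _ = #(noLoneLetterWords κ (2 * k)) / (2 * d : ℝ) ^ (2 * k) * (Fintype.card Ω - 1) := by
        field_simp
    _ ≤ (Real.exp 1 * k / d) ^ k * Real.exp 1 ^ k := by
        gcongr; exact card_noLoneLetterWords_div_le hk hkd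
    _ = (Real.exp 1 ^ 2 * k / d) ^ k := by
        rw [← mul_pow]
        congr 1
        ring

theorem IsRightAction.average_lambdaSch_le (ha : IsRightAction a)
    (htrans : ∀ ω ω' : Ω, ∃ g, a ω g = ω') (hn : 2 ≤ Fintype.card Ω) {δ : ℝ} (hδ : 0 < δ)
    (hδ1 : δ ≤ 1) (hd : 16 / δ ^ 2 * Real.log (Fintype.card Ω) ≤ Fintype.card κ) :
    (Fintype.card (κ → G) : ℝ)⁻¹ * ∑ s : κ → G, lambdaSch a (symmetrize s) ≤ δ := by
  have : Nonempty Ω := Fintype.card_pos_iff.mp (by omega)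
  set L := Real.log (Fintype.card Ω)
  set d := Fintype.card κ
  have hL : 1 / 2 ≤ L := by
    have := Real.log_le_log (by norm_num) (show (2 : ℝ) ≤ Fintype.card Ω by exact_mod_cast hn)
    linarith [Real.log_two_gt_d9]
  obtain ⟨m, hLk, hkL⟩ := exists_two_pow_mem_Icc hL
  have hLd : 16 * L ≤ δ ^ 2 * d := by
    rw [div_mul_eq_mul_div, div_le_iff₀ (by positivity)] at hd
    linarith
  have hkd : 2 ^ m ≤ d := by
    have : δ ^ 2 ≤ 1 := pow_le_one₀ hδ.le hδ1
    exact_mod_cast (show (2 : ℝ) ^ m ≤ d by nlinarith)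
  -- the constant `16` comes from `e² < 8` and `2 ^ m ≤ 2 log |Ω|`
  have hrate : Real.exp 1 ^ 2 * (2 ^ m : ℕ) / d ≤ δ ^ 2 := by
    rw [div_le_iff₀ (by exact_mod_cast (Nat.two_pow_pos m).trans_le hkd), Nat.cast_pow,
      Nat.cast_ofNat]
    have he : Real.exp 1 ^ 2 ≤ 8 := by nlinarith [Real.exp_one_lt_d9, Real.exp_pos 1]
    calc Real.exp 1 ^ 2 * 2 ^ m ≤ 8 * 2 ^ m := by gcongr
      _ ≤ δ ^ 2 * d := by linarith
  refine average_le_of_average_pow_le (K := 2 * 2 ^ m) (fun s => lambdaSch_nonneg a _)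
    (by positivity) hδ.le ?_
  calc _ ≤ _ := ha.average_lambdaSch_pow_le htrans hkd (by exact_mod_cast hLk)
    _ ≤ (δ ^ 2) ^ 2 ^ m := by gcongr
    _ = δ ^ (2 * 2 ^ m) := (pow_mul _ _ _).symm

end Expectation

end RandomSchreier

open RandomSchreier in
/-- **Random Schreier graphs are two-sided expanders.**
For every `ε > 0` there is `C_ε > 0` such that for every finite group `G` acting transitively
(on the right) on a finite set `Ω` with `|Ω| ≥ 2`, with `d = ⌈C_ε ⬝ ln |Ω|⌉`, the average over
all `d`-tuples `(s₁, …, s_d) ∈ G^d` of `λ(G ↺ Ω, S ⊔ S⁻¹)` is at most `ε`, where `S ⊔ S⁻¹` is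
the symmetric multiset `{s₁, …, s_d, s₁⁻¹, …, s_d⁻¹}` of size `2d`. -/
theorem random_schreier_graphs_are_expanders :
    ∀ ε : ℝ, 0 < ε → ∃ C : ℝ, 0 < C ∧
      ∀ (G Ω : Type) [Group G] [Fintype G] [Fintype Ω] (a : Ω → G → Ω),
        (∀ ω : Ω, a ω 1 = ω) →
        (∀ (ω : Ω) (g h : G), a (a ω g) h = a ω (g * h)) →
        (∀ ω ω' : Ω, ∃ g : G, a ω g = ω') →
        2 ≤ Fintype.card Ω →
        ∀ d : ℕ, d = ⌈C * Real.log (Fintype.card Ω)⌉₊ →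
          ((Fintype.card G : ℝ) ^ d)⁻¹ *
              ∑ s : Fin d → G, lambdaSch a (Sum.elim s (fun i => (s i)⁻¹)) ≤ ε := by
  intro ε hε
  refine ⟨16 / min ε 1 ^ 2, by positivity, fun G Ω _ _ _ a ha1 ham htrans hn d hd => ?_⟩
  classical
  rw [show (Fintype.card G : ℝ) ^ d = Fintype.card (Fin d → G) by simp]
  refine (IsRightAction.average_lambdaSch_le ⟨ha1, ham⟩ htrans hn (lt_min hε one_pos)
    (min_le_right _ _) ?_).trans (min_le_left _ _)
  simpa [hd] using Nat.le_ceil _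
end

section
/- Let G be a finite group, Y ≤ H ≤ G subgroups, and S a symmetric multiset in G of size d ≥ 1 given by s₁,…,s_d. Let T ⊆ G be a right transversal of H in G (so G is the disjoint union of the cosets Ht, t ∈ T) and for x ∈ G let x̄ denote the unique element of T ∩ Hx. Let S̄ be the multiset in H indexed by T × {1,…,d} with entries t·s_i·(t·s_i)̄⁻¹. Let M_G be the averaging operator on functions on the right coset space Y\G, (M_G f)(Yg) = (1/d)·∑_i f(Y g s_i), and let M_H be the averaging operator on functions on Y\H, (M_H f)(Yh) = (1/(|T|·d))·∑_{t∈T}∑_i f(Y h t s_i (t s_i)̄⁻¹). If ε > 0 is such that ⟨M_G v, v⟩ ≤ (1−ε)·⟨v,v⟩ for every mean-zero v : Y\G → ℝ, then ⟨M_H f, f⟩ ≤ (1−ε)·⟨f,f⟩ for every mean-zero f : Y\H → ℝ. (That is, gap(H,Y,S̄) ≥ gap(G,Y,S).) -/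
/-!
A right transversal `T` of `H` writes every coset of `Y ≤ H` in `G` uniquely as `Y h t` with
`h ∈ H`, `t ∈ T`, so `Y\G ≃ Y\H × T`; in these coordinates right multiplication by `s` is
`(Y h, t) ↦ (Y h · t s (t s)̄⁻¹, (t s)̄)`. Pulling a mean-zero `f` on `Y\H` back along the
projection `Y\G → Y\H` gives a mean-zero `v` with `⟨v, v⟩ = |T| ⟨f, f⟩` and
`⟨M_G v, v⟩ = |T| ⟨M_H f, f⟩`, so the gap inequality for `v` is the one for `f`.
-/

open Finset

def rmul {G : Type*} [Group G] (Y : Subgroup G)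
    (q : Quotient (QuotientGroup.rightRel Y)) (g : G) :
    Quotient (QuotientGroup.rightRel Y) :=
  Quotient.map' (· * g)
    (fun a b h => by
      rw [QuotientGroup.rightRel_apply] at h ⊢
      simpa [mul_assoc] using h) q

noncomputable instance {α : Type*} [Finite α] (s : Setoid α) : Fintype (Quotient s) :=
  Fintype.ofFinite _

theorem Equiv.sum_comp_fst_symm {α β γ M : Type*} [Fintype α] [Fintype β] [Fintype γ]
    [AddCommMonoid M] (e : α × β ≃ γ) (F : α → M) :
    ∑ c, F (e.symm c).1 = Fintype.card β • ∑ a, F a := by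
  rw [← e.sum_comp, Fintype.sum_prod_type_right]
  simp only [Equiv.symm_apply_apply, sum_const, card_univ]

namespace Subgroup.IsComplement

variable {G : Type*} [Group G] {H Y : Subgroup G} {T : Set G}

theorem of_existsUnique_mul_inv_mem (hT : ∀ x : G, ∃! t, t ∈ T ∧ x * t⁻¹ ∈ H) :
    IsComplement (H : Set G) T :=
  isComplement_iff_existsUnique_mul_inv_mem.2 fun x => by
    obtain ⟨t, ⟨ht, hx⟩, huniq⟩ := hT x
    exact ⟨⟨t, ht⟩, hx, fun u hu => Subtype.ext (huniq u ⟨u.2, hu⟩)⟩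

theorem equiv_snd_eq_of_mul_inv_mem (hc : IsComplement (H : Set G) T) {x t : G} (ht : t ∈ T)
    (hx : x * t⁻¹ ∈ H) : ((hc.equiv x).2 : G) = t := by
  rw [← inv_mul_cancel_right x t, hc.equiv_mul_left_of_mem hx,
    hc.equiv_snd_eq_self_of_mem_of_one_mem H.one_mem ht]

theorem equiv_fst_eq_of_mul_inv_mem (hc : IsComplement (H : Set G) T) {x t : G} (ht : t ∈ T)
    (hx : x * t⁻¹ ∈ H) : (hc.equiv x).1 = ⟨x * t⁻¹, hx⟩ :=
  Subtype.ext <| by rw [equiv_fst_eq_mul_inv, hc.equiv_snd_eq_of_mul_inv_mem ht hx]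

theorem equiv_eq_of_rightRel (hc : IsComplement (H : Set G) T) (hYH : Y ≤ H) {a b : G}
    (hab : QuotientGroup.rightRel Y a b) :
    hc.equiv b = (⟨b * a⁻¹, hYH (QuotientGroup.rightRel_apply.1 hab)⟩ * (hc.equiv a).1,
      (hc.equiv a).2) := by
  rw [← hc.equiv_mul_left, Subgroup.coe_mk, inv_mul_cancel_right]

noncomputable def rightQuotientProdEquiv (hc : IsComplement (H : Set G) T) (hYH : Y ≤ H) :
    Quotient (QuotientGroup.rightRel (Y.subgroupOf H)) × T ≃
      Quotient (QuotientGroup.rightRel Y) where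
  toFun pt := Quotient.map' (fun h : H => (h : G) * pt.2) (fun a b hab => by
      rw [QuotientGroup.rightRel_apply, Subgroup.mem_subgroupOf] at hab
      rw [QuotientGroup.rightRel_apply]
      simpa [mul_assoc] using hab) pt.1
  invFun q := (Quotient.map' (fun g => (hc.equiv g).1) (fun a b hab => by
      rw [QuotientGroup.rightRel_apply, Subgroup.mem_subgroupOf, hc.equiv_eq_of_rightRel hYH hab]
      simpa using QuotientGroup.rightRel_apply.1 hab) q,
    Quotient.liftOn' q (fun g => (hc.equiv g).2) fun a b hab => by
      rw [hc.equiv_eq_of_rightRel hYH hab])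
  left_inv := by
    rintro ⟨p, t⟩
    induction p using Quotient.inductionOn' with
    | h h =>
      have hsplit : hc.equiv (h * t) = (h, t) := hc.equiv.apply_symm_apply (h, t)
      simp only [SetLike.coe_sort_coe, Quotient.map'_mk'', hsplit, Quotient.liftOn'_mk'']
  right_inv q := by
    induction q using Quotient.inductionOn' with
    | h g => simp only [Quotient.map'_mk'', Quotient.liftOn'_mk'', equiv_fst_mul_equiv_snd]

theorem rmul_rightQuotientProdEquiv (hc : IsComplement (H : Set G) T) (hYH : Y ≤ H)
    (p : Quotient (QuotientGroup.rightRel (Y.subgroupOf H))) (t : T) (g : G) :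
    rmul Y (hc.rightQuotientProdEquiv hYH (p, t)) g =
      hc.rightQuotientProdEquiv hYH
        (rmul (Y.subgroupOf H) p (hc.equiv (t * g)).1, (hc.equiv (t * g)).2) := by
  induction p using Quotient.inductionOn' with
  | h h =>
    show Quotient.mk'' ((h : G) * t * g) =
      Quotient.mk'' ((h : G) * (hc.equiv (t * g)).1 * (hc.equiv (t * g)).2)
    rw [mul_assoc, mul_assoc, equiv_fst_mul_equiv_snd]

theorem sum_rmul_mul_fst_rightQuotientProdEquiv_symm [Finite G] [Fintype T] {ι R : Type*}
    [Fintype ι] [NonUnitalNonAssocSemiring R] (hc : IsComplement (H : Set G) T) (hYH : Y ≤ H)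
    (s : ι → G)
    (f : Quotient (QuotientGroup.rightRel (Y.subgroupOf H)) → R) :
    ∑ q, (∑ i, f ((hc.rightQuotientProdEquiv hYH).symm (rmul Y q (s i))).1) *
        f ((hc.rightQuotientProdEquiv hYH).symm q).1 =
      ∑ p, (∑ t : T, ∑ i, f (rmul (Y.subgroupOf H) p (hc.equiv (t * s i)).1)) * f p := by
  rw [← (hc.rightQuotientProdEquiv hYH).sum_comp, Fintype.sum_prod_type]
  refine sum_congr rfl fun p _ => ?_
  simp only [rmul_rightQuotientProdEquiv, Equiv.symm_apply_apply, sum_mul]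

end Subgroup.IsComplement

theorem gap_reidemeister_schreier_general
    {G : Type*} [Group G] [Fintype G] (H Y : Subgroup G) (hYH : Y ≤ H)
    (d : ℕ) (s : Fin d → G)
    (T : Finset G) (bar : G → G)
    (hT : ∀ x : G, ∃! t, t ∈ T ∧ x * t⁻¹ ∈ H)
    (hbar : ∀ x : G, bar x ∈ T ∧ x * (bar x)⁻¹ ∈ H)
    (ε : ℝ)
    (hgap : ∀ v : Quotient (QuotientGroup.rightRel Y) → ℝ, (∑ q, v q) = 0 →
      (∑ q, ((d : ℝ)⁻¹ * ∑ i, v (rmul Y q (s i))) * v q) ≤ (1 - ε) * ∑ q, v q * v q) :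
    ∀ f : Quotient (QuotientGroup.rightRel (Y.subgroupOf H)) → ℝ, (∑ q, f q) = 0 →
      (∑ q, (((T.card : ℝ) * (d : ℝ))⁻¹ *
          ∑ t ∈ T, ∑ i, f (rmul (Y.subgroupOf H) q
            ⟨t * s i * (bar (t * s i))⁻¹, (hbar (t * s i)).2⟩)) * f q) ≤
        (1 - ε) * ∑ q, f q * f q := by
  intro f hf
  have hc := Subgroup.IsComplement.of_existsUnique_mul_inv_mem hT
  let e := hc.rightQuotientProdEquiv hYH
  have hschreier (x : G) : ⟨x * (bar x)⁻¹, (hbar x).2⟩ = (hc.equiv x).1 :=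
    (hc.equiv_fst_eq_of_mul_inv_mem (hbar x).1 (hbar x).2).symm
  have hpull := hgap (fun q => f (e.symm q).1) (by simp [e.sum_comp_fst_symm, hf])
  simp only [mul_assoc, ← mul_sum] at hpull
  rw [hc.sum_rmul_mul_fst_rightQuotientProdEquiv_symm hYH s f,
    e.sum_comp_fst_symm (fun p => f p * f p)] at hpull
  simp only [SetLike.coe_sort_coe, Fintype.card_coe, nsmul_eq_mul] at hpull
  have hTpos : (0 : ℝ) < T.card := by exact_mod_cast card_pos.2 ⟨bar 1, (hbar 1).1⟩
  calc _ = ((T.card : ℝ) * d)⁻¹ * ∑ p, (∑ t : (T : Set G), ∑ i,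
        f (rmul (Y.subgroupOf H) p (hc.equiv (t * s i)).1)) * f p := by
        simp only [mul_assoc ((T.card : ℝ) * d)⁻¹, ← mul_sum, ← sum_coe_sort T, hschreier]
        rfl -- the sums over `{t // t ∈ T}` and `↥(T : Set G)` agree only up to unfolding
    _ ≤ (T.card : ℝ)⁻¹ * ((1 - ε) * (T.card * ∑ p, f p * f p)) := by
        rw [mul_inv, mul_assoc]
        exact mul_le_mul_of_nonneg_left hpull (by positivity)
    _ = (1 - ε) * ∑ p, f p * f p := by field_simp

/-- Monotonicity of the spectral gap under the Reidemeister–Schreier rewriting: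
if every mean-zero function `v` on `Y\G` satisfies `⟨M_G v, v⟩ ≤ (1−ε)⟨v,v⟩`, then every
mean-zero function `f` on `Y\H` satisfies `⟨M_H f, f⟩ ≤ (1−ε)⟨f,f⟩`, where `M_G` is the
averaging operator of the multiset `S = (s₁, …, s_d)` on `Y\G` and `M_H` is the averaging
operator on `Y\H` of the Reidemeister–Schreier multiset
`S̄ = { t·sᵢ·(t·sᵢ)̄⁻¹ : t ∈ T, 1 ≤ i ≤ d }` attached to a right transversal `T` of `H`
(`x̄` denotes the unique element of `T ∩ Hx`).  That is, `gap(H,Y,S̄) ≥ gap(G,Y,S)`. -/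
theorem gap_reidemeister_schreier
    {G : Type*} [Group G] [Fintype G] (H Y : Subgroup G) (hYH : Y ≤ H)
    (d : ℕ) (hd : 1 ≤ d) (s : Fin d → G)
    (σ : Fin d → Fin d) (hσ : ∀ i, σ (σ i) = i) (hsσ : ∀ i, s (σ i) = (s i)⁻¹)
    (T : Finset G) (bar : G → G)
    (hT : ∀ x : G, ∃! t, t ∈ T ∧ x * t⁻¹ ∈ H)
    (hbar : ∀ x : G, bar x ∈ T ∧ x * (bar x)⁻¹ ∈ H)
    (ε : ℝ)
    (hgap : ∀ v : Quotient (QuotientGroup.rightRel Y) → ℝ, (∑ q, v q) = 0 →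
      (∑ q, ((d : ℝ)⁻¹ * ∑ i, v (rmul Y q (s i))) * v q) ≤ (1 - ε) * ∑ q, v q * v q) :
    ∀ f : Quotient (QuotientGroup.rightRel (Y.subgroupOf H)) → ℝ, (∑ q, f q) = 0 →
      (∑ q, (((T.card : ℝ) * (d : ℝ))⁻¹ *
          ∑ t ∈ T, ∑ i, f (rmul (Y.subgroupOf H) q
            ⟨t * s i * (bar (t * s i))⁻¹, (hbar (t * s i)).2⟩)) * f q) ≤
        (1 - ε) * ∑ q, f q * f q :=
  gap_reidemeister_schreier_general H Y hYH d s T bar hT hbar ε hgap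
end

section
/- Let G be a finite group, Y ≤ H ≤ G subgroups, and S a symmetric multiset in G of size d ≥ 1 given by s₁,…,s_d. Let T ⊆ G be a right transversal of H in G and for x ∈ G let x̄ denote the unique element of T ∩ Hx. Let M_G be the averaging operator on functions on Y\G, (M_G f)(Yg) = (1/d)·∑_i f(Y g s_i), and let M_H be the averaging operator on functions on Y\H, (M_H f)(Yh) = (1/(|T|·d))·∑_{t∈T}∑_i f(Y h t s_i (t s_i)̄⁻¹). If a ≥ 0 is such that |⟨M_G v, v⟩| ≤ a·⟨v,v⟩ for every mean-zero v : Y\G → ℝ, then |⟨M_H f, f⟩| ≤ a·⟨f,f⟩ for every mean-zero f : Y\H → ℝ. (That is, λ(H,Y,S̄) ≤ λ(G,Y,S).) -/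
open Finset

/-!
Lift a mean-zero `f` on `Y\H` to `v (Yg) = f (Y g ḡ⁻¹)` on `Y\G`. Through the bijection
`Y\H × T ≃ Y\G`, `(Yh, t) ↦ Yht`, the function `v` is `f` repeated `|T|` times, so `v` is
mean-zero, `⟨v, v⟩ = |T|⟨f, f⟩`, and `⟨M_G v, v⟩ = |T|⟨M_H f, f⟩` because right multiplication
by `s` sends `Yht` to `Y (h · ts(ts)̄⁻¹) (ts)̄`. The bound for `v` then divides down to `f`.
-/

open QuotientGroup

section Cosets

variable {G : Type*} [Group G]

lemma rmul_mk (Y : Subgroup G) (g x : G) :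
    rmul Y (Quotient.mk'' g) x = Quotient.mk'' (g * x) :=
  rfl

lemma rmul_rmul (Y : Subgroup G) (q : Quotient (rightRel Y)) (x y : G) :
    rmul Y (rmul Y q x) y = rmul Y q (x * y) := by
  induction q using Quotient.inductionOn' with
  | h g => simp only [rmul_mk, mul_assoc]

def cosetInclusion (H Y : Subgroup G) :
    Quotient (rightRel (Y.subgroupOf H)) → Quotient (rightRel Y) :=
  Quotient.map' Subtype.val fun _ _ h => by
    rw [rightRel_apply, Subgroup.mem_subgroupOf] at h
    rwa [rightRel_apply]

lemma cosetInclusion_rmul (H Y : Subgroup G) (p : Quotient (rightRel (Y.subgroupOf H)))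
    (h : H) : cosetInclusion H Y (rmul (Y.subgroupOf H) p h) = rmul Y (cosetInclusion H Y p) h := by
  induction p using Quotient.inductionOn' with
  | h _ => rfl

lemma eq_of_mem_transversal {H : Subgroup G} {T : Finset G}
    (hT : ∀ x : G, ∃! t, t ∈ T ∧ x * t⁻¹ ∈ H) {t u : G} (ht : t ∈ T) (hu : u ∈ T)
    (htu : t * u⁻¹ ∈ H) : t = u :=
  (hT t).unique ⟨ht, by simp⟩ ⟨hu, htu⟩

end Cosets

section Transversal

variable {G : Type*} [Group G] {H Y : Subgroup G} (hYH : Y ≤ H) {T : Finset G}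
  (hT : ∀ x : G, ∃! t, t ∈ T ∧ x * t⁻¹ ∈ H)

noncomputable def transversalEquiv :
    Quotient (rightRel (Y.subgroupOf H)) × T ≃ Quotient (rightRel Y) :=
  Equiv.ofBijective (fun x => rmul Y (cosetInclusion H Y x.1) x.2) <| by
    constructor
    · rintro ⟨p, t, ht⟩ ⟨p', t', ht'⟩ hpt
      induction p using Quotient.inductionOn' with | h h => ?_
      induction p' using Quotient.inductionOn' with | h h' => ?_
      have hY : (h' : G) * t' * ((h : G) * t)⁻¹ ∈ Y := rightRel_apply.mp (Quotient.exact' hpt)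
      have htt' : t' = t := by
        refine eq_of_mem_transversal hT ht' ht ?_
        have := H.mul_mem (H.mul_mem (H.inv_mem h'.2) (hYH hY)) h.2
        convert this using 1
        group
      subst htt'
      refine Prod.ext (Quotient.sound' ?_) rfl
      rw [rightRel_apply, Subgroup.mem_subgroupOf]
      convert hY using 1
      simp
    · intro q
      induction q using Quotient.inductionOn' with | h g => ?_
      obtain ⟨t, ⟨ht, hgt⟩, -⟩ := hT g
      exact ⟨(Quotient.mk'' ⟨g * t⁻¹, hgt⟩, ⟨t, ht⟩), by simp [cosetInclusion, rmul_mk]⟩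

lemma transversalEquiv_apply (x : Quotient (rightRel (Y.subgroupOf H)) × T) :
    transversalEquiv hYH hT x = rmul Y (cosetInclusion H Y x.1) x.2 :=
  rfl

lemma transversalEquiv_symm_rmul {bar : G → G} (hbar : ∀ x : G, bar x ∈ T ∧ x * (bar x)⁻¹ ∈ H)
    (p : Quotient (rightRel (Y.subgroupOf H))) (t : T) (x : G) :
    (transversalEquiv hYH hT).symm (rmul Y (transversalEquiv hYH hT (p, t)) x) =
      (rmul (Y.subgroupOf H) p ⟨t * x * (bar (t * x))⁻¹, (hbar (t * x)).2⟩,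
        ⟨bar (t * x), (hbar (t * x)).1⟩) := by
  rw [Equiv.symm_apply_eq, transversalEquiv_apply, transversalEquiv_apply, cosetInclusion_rmul,
    rmul_rmul, rmul_rmul]
  simp

lemma sum_transversalEquiv_symm_fst [Finite G] {M : Type*} [AddCommMonoid M]
    (φ : Quotient (rightRel (Y.subgroupOf H)) → M) :
    ∑ q, φ ((transversalEquiv hYH hT).symm q).1 = T.card • ∑ p, φ p := by
  rw [← (transversalEquiv hYH hT).sum_comp]
  simp [Fintype.sum_prod_type, Finset.smul_sum]

end Transversal

theorem lambda_reidemeister_schreier_general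
    {G : Type*} [Group G] [Fintype G] (H Y : Subgroup G) (hYH : Y ≤ H)
    (d : ℕ) (s : Fin d → G)
    (T : Finset G) (bar : G → G)
    (hT : ∀ x : G, ∃! t, t ∈ T ∧ x * t⁻¹ ∈ H)
    (hbar : ∀ x : G, bar x ∈ T ∧ x * (bar x)⁻¹ ∈ H)
    (a : ℝ)
    (hlam : ∀ v : Quotient (QuotientGroup.rightRel Y) → ℝ, (∑ q, v q) = 0 →
      |∑ q, ((d : ℝ)⁻¹ * ∑ i, v (rmul Y q (s i))) * v q| ≤ a * ∑ q, v q * v q) :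
    ∀ f : Quotient (QuotientGroup.rightRel (Y.subgroupOf H)) → ℝ, (∑ q, f q) = 0 →
      |∑ q, (((T.card : ℝ) * (d : ℝ))⁻¹ *
          ∑ t ∈ T, ∑ i, f (rmul (Y.subgroupOf H) q
            ⟨t * s i * (bar (t * s i))⁻¹, (hbar (t * s i)).2⟩)) * f q| ≤
        a * ∑ q, f q * f q := by
  intro f hf
  set E := transversalEquiv hYH hT
  set v : Quotient (rightRel Y) → ℝ := fun q => f (E.symm q).1
  have hT₀ : (0 : ℝ) < T.card := by
    obtain ⟨t, ⟨ht, -⟩, -⟩ := hT 1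
    exact_mod_cast Finset.card_pos.mpr ⟨t, ht⟩
  have hv : ∑ q, v q = 0 := by
    simp [v, E, sum_transversalEquiv_symm_fst, hf]
  have hvv : ∑ q, v q * v q = T.card * ∑ p, f p * f p := by
    simpa [nsmul_eq_mul] using sum_transversalEquiv_symm_fst hYH hT fun p => f p * f p
  have hform : ∑ q, ((d : ℝ)⁻¹ * ∑ i, v (rmul Y q (s i))) * v q =
      T.card * ∑ p, (((T.card : ℝ) * (d : ℝ))⁻¹ * ∑ t ∈ T, ∑ i, f (rmul (Y.subgroupOf H) p
            ⟨t * s i * (bar (t * s i))⁻¹, (hbar (t * s i)).2⟩)) * f p := by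
    rw [← E.sum_comp, Fintype.sum_prod_type, Finset.mul_sum]
    refine Finset.sum_congr rfl fun p _ => ?_
    simp only [v, E, transversalEquiv_symm_rmul hYH hT hbar, Equiv.symm_apply_apply,
      ← Finset.sum_mul, ← Finset.mul_sum]
    rw [← Finset.sum_coe_sort T]
    field_simp
  have key := hlam v hv
  rw [hform, hvv, abs_mul, abs_of_pos hT₀] at key
  exact le_of_mul_le_mul_left (key.trans_eq (by ring)) hT₀

/-- Monotonicity of `λ` under the Reidemeister–Schreier rewriting:
if every mean-zero function `v` on `Y\G` satisfies `|⟨M_G v, v⟩| ≤ a⟨v,v⟩`, then every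
mean-zero function `f` on `Y\H` satisfies `|⟨M_H f, f⟩| ≤ a⟨f,f⟩`, where `M_G` is the
averaging operator of the multiset `S = (s₁, …, s_d)` on `Y\G` and `M_H` is the averaging
operator on `Y\H` of the Reidemeister–Schreier multiset
`S̄ = { t·sᵢ·(t·sᵢ)̄⁻¹ : t ∈ T, 1 ≤ i ≤ d }` attached to a right transversal `T` of `H`.
That is, `λ(H,Y,S̄) ≤ λ(G,Y,S)`. -/
theorem lambda_reidemeister_schreier
    {G : Type*} [Group G] [Fintype G] (H Y : Subgroup G) (hYH : Y ≤ H)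
    (d : ℕ) (hd : 1 ≤ d) (s : Fin d → G)
    (σ : Fin d → Fin d) (hσ : ∀ i, σ (σ i) = i) (hsσ : ∀ i, s (σ i) = (s i)⁻¹)
    (T : Finset G) (bar : G → G)
    (hT : ∀ x : G, ∃! t, t ∈ T ∧ x * t⁻¹ ∈ H)
    (hbar : ∀ x : G, bar x ∈ T ∧ x * (bar x)⁻¹ ∈ H)
    (a : ℝ) (ha : 0 ≤ a)
    (hlam : ∀ v : Quotient (QuotientGroup.rightRel Y) → ℝ, (∑ q, v q) = 0 →
      |∑ q, ((d : ℝ)⁻¹ * ∑ i, v (rmul Y q (s i))) * v q| ≤ a * ∑ q, v q * v q) :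
    ∀ f : Quotient (QuotientGroup.rightRel (Y.subgroupOf H)) → ℝ, (∑ q, f q) = 0 →
      |∑ q, (((T.card : ℝ) * (d : ℝ))⁻¹ *
          ∑ t ∈ T, ∑ i, f (rmul (Y.subgroupOf H) q
            ⟨t * s i * (bar (t * s i))⁻¹, (hbar (t * s i)).2⟩)) * f q| ≤
        a * ∑ q, f q * f q :=
  lambda_reidemeister_schreier_general H Y hYH d s T bar hT hbar a hlam
end
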